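/- arXiv:1106.4100 — 2 statements merged into one kernel-verified Lean document; each statement's English description precedes it below -/
import Mathlib

section
/- Context preservation, part 2: if ∀q, g ∩ S(q) ⊆ S(g ∩ q), then {g};S* = {g};S*;{g}, i.e. for all q, g ∩ S*(q) = g ∩ S*(g ∩ q). -/
/-! The hypothesis on `g` makes `g ∩ W q` a post-fixed point of `X ↦ S X ∩ (g ∩ q)`, so by
coinduction it lies in `W (g ∩ q)`. The reverse inclusion is monotonicity of `W` in `q`. -/

def IsWeakIter {α : Type*} (S W : Set α → Set α) : Prop :=
  ∀ q : Set α, IsGreatest (Function.fixedPoints fun X => S X ∩ q) (W q)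

namespace IsWeakIter

variable {α : Type*} {S W : Set α → Set α}

theorem eq_apply_inter (hW : IsWeakIter S W) (q : Set α) : W q = S (W q) ∩ q :=
  ((hW q).1).symm

theorem subset_of_subset_apply_inter (hS : Monotone S) (hW : IsWeakIter S W) {q X : Set α}
    (hX : X ⊆ S X ∩ q) : X ⊆ W q :=
  let F : Set α →o Set α := ⟨fun X => S X ∩ q, fun _ _ h => Set.inter_subset_inter_left q (hS h)⟩
  (OrderHom.le_gfp F hX).trans ((hW q).2 (OrderHom.isFixedPt_gfp F))

theorem monotone (hS : Monotone S) (hW : IsWeakIter S W) : Monotone W := by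
  intro p q hpq
  apply hW.subset_of_subset_apply_inter hS
  calc W p = S (W p) ∩ p := hW.eq_apply_inter p
    _ ⊆ S (W p) ∩ q := Set.inter_subset_inter_right _ hpq

end IsWeakIter

theorem context_preservation_2 {α : Type*} (S W : Set α → Set α) (g : Set α)
    (hS : Monotone S) (hW : IsWeakIter S W)
    (hcomm : ∀ q : Set α, g ∩ S q ⊆ S (g ∩ q)) :
    ∀ q : Set α, g ∩ W q = g ∩ W (g ∩ q) := by
  intro q
  have hpost : g ∩ W q ⊆ S (g ∩ W q) ∩ (g ∩ q) := by
    rintro x ⟨hxg, hxW⟩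
    rw [hW.eq_apply_inter q] at hxW
    exact ⟨hcomm (W q) ⟨hxg, hxW.1⟩, hxg, hxW.2⟩
  apply Set.Subset.antisymm
  · exact Set.subset_inter Set.inter_subset_left (hW.subset_of_subset_apply_inter hS hpost)
  · exact Set.inter_subset_inter_right g (hW.monotone hS Set.inter_subset_right)
end

section
/- Context preservation, part 3: if ∀q, g ∩ S(q) ⊆ S(g ∩ q), then {g};S* = ({g};S)*, i.e. for all q, g ∩ S*(q) = ({g};S)*(q), where ({g};S)(q) = g ∩ S(q). -/
/-!
The commutation hypothesis makes `g ∩ S*(q)` a fixed point of `X ↦ g ∩ S X ∩ q`, hence it lies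
below `({g};S)*(q)`. Conversely `({g};S)*(q)` lies in `g` and is a post-fixed point of
`X ↦ S X ∩ q`, so by Knaster–Tarski it lies below `S*(q)`.
-/

open Function

theorem IsGreatest.le_of_le_map_fixedPoints {α : Type*} [CompleteLattice α] {f : α → α}
    (hf : Monotone f) {w a : α} (hw : IsGreatest (fixedPoints f) w) (ha : a ≤ f a) : a ≤ w :=
  (OrderHom.isGreatest_gfp ⟨f, hf⟩).unique hw ▸ OrderHom.le_gfp ⟨f, hf⟩ ha

theorem isFixedPt_inf_of_inf_map_le_map_inf {α : Type*} [SemilatticeInf α] {S : α → α}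
    (hS : Monotone S) {g q w : α} (hcomm : g ⊓ S w ≤ S (g ⊓ w)) (hw : IsFixedPt (S · ⊓ q) w) :
    IsFixedPt (g ⊓ S · ⊓ q) (g ⊓ w) := by
  have hw' : S w ⊓ q = w := hw
  apply le_antisymm
  · calc g ⊓ S (g ⊓ w) ⊓ q ≤ g ⊓ (S w ⊓ q) :=
          le_inf (inf_le_left.trans inf_le_left)
            (inf_le_inf_right q (inf_le_right.trans (hS inf_le_right)))
      _ = g ⊓ w := by rw [hw']
  · calc g ⊓ w = g ⊓ (S w ⊓ q) := by rw [hw']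
      _ ≤ g ⊓ S (g ⊓ w) ⊓ q :=
          le_inf (le_inf inf_le_left (hcomm.trans' (inf_le_inf_left g inf_le_left)))
            (inf_le_right.trans inf_le_right)

theorem context_preservation_3 {α : Type*} (S W WG : Set α → Set α) (g : Set α)
    (hS : Monotone S) (hW : IsWeakIter S W)
    (hWG : IsWeakIter (fun X => g ∩ S X) WG)
    (hcomm : ∀ q : Set α, g ∩ S q ⊆ S (g ∩ q)) :
    ∀ q : Set α, g ∩ W q = WG q := by
  intro q
  have hWG_fixed : g ∩ S (WG q) ∩ q = WG q := (hWG q).1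
  apply le_antisymm
  · exact (hWG q).2 (isFixedPt_inf_of_inf_map_le_map_inf hS (hcomm (W q)) (hW q).1)
  · have hF : Monotone fun X => S X ∩ q := fun _ _ h => Set.inter_subset_inter_left q (hS h)
    have hWG_post : WG q ⊆ S (WG q) ∩ q :=
      hWG_fixed.symm.subset.trans (Set.inter_subset_inter_left q Set.inter_subset_right)
    exact Set.subset_inter
      (hWG_fixed.symm.subset.trans (Set.inter_subset_left.trans Set.inter_subset_left))
      ((hW q).le_of_le_map_fixedPoints hF hWG_post)
end
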